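/- H and K are first integrals of the unperturbed Lerman–Umanskiĭ system: for all λ, ω ∈ ℝ and all x ∈ ℝ⁴, ⟨∇H(x), F(0, x)⟩ = 0 and ⟨∇K(x), F(0, x)⟩ = 0, where ⟨·,·⟩ is the Euclidean inner product on ℝ⁴ and ∇ denotes the gradient. -/

import Mathlib

/-!
With `J (a, b, c, d) = (c, d, -a, -b)` the canonical symplectic matrix on `ℝ⁴ = ℝ²_q × ℝ²_p`, the
unperturbed field is Hamiltonian: `F(0, x) = J ∇H(x)`. Hence `⟨∇H, F(0, ·)⟩ = ⟨∇H, J ∇H⟩` vanishes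
by skew-symmetry of `J`, and `⟨∇K, F(0, ·)⟩ = ⟨∇K, J ∇H⟩` is the Poisson bracket `{K, H}`, which
vanishes because `H` is invariant under the flow of `K`: the simultaneous rotation of the planes
`(x₁, x₂)` and `(x₃, x₄)`.
-/

open Real InnerProductSpace

local notation "ℝ⁴" => EuclideanSpace ℝ (Fin 4)

theorem HasFDerivAt.hasGradientAt_of_apply_eq_inner {E : Type*} [NormedAddCommGroup E]
    [InnerProductSpace ℝ E] [CompleteSpace E] {f : E → ℝ} {L : E →L[ℝ] ℝ} {g x : E}
    (hf : HasFDerivAt f L x) (hL : ∀ v, L v = ⟪g, v⟫_ℝ) : HasGradientAt f g x := by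
  rwa [hasGradientAt_iff_hasFDerivAt, show toDual ℝ E g = L from
    ContinuousLinearMap.ext fun v => by rw [toDual_apply_apply, hL]]

theorem EuclideanSpace.hasFDerivAt_apply {ι : Type*} [Fintype ι] (i : ι)
    (x : EuclideanSpace ℝ ι) :
    HasFDerivAt (fun y : EuclideanSpace ℝ ι => y i)
      (EuclideanSpace.proj i : EuclideanSpace ℝ ι →L[ℝ] ℝ) x :=
  (EuclideanSpace.proj i : EuclideanSpace ℝ ι →L[ℝ] ℝ).hasFDerivAt

theorem Real.inv_sqrt_two : (√2)⁻¹ = √2 / 2 := by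
  field_simp
  simp

theorem EuclideanSpace.inner_fin_four (u v : EuclideanSpace ℝ (Fin 4)) :
    ⟪u, v⟫_ℝ = u 0 * v 0 + u 1 * v 1 + u 2 * v 2 + u 3 * v 3 := by
  simp only [PiLp.inner_apply, RCLike.inner_apply, conj_trivial, Fin.sum_univ_four]
  ring

noncomputable section

def symplecticJ (v : ℝ⁴) : ℝ⁴ := !₂[v 2, v 3, -v 0, -v 1]

theorem inner_self_symplecticJ (v : ℝ⁴) : ⟪v, symplecticJ v⟫_ℝ = 0 := by
  simp only [EuclideanSpace.inner_fin_four, symplecticJ, Matrix.cons_val]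
  ring

def lermanUmanskiiH (lam ω : ℝ) (x : ℝ⁴) : ℝ :=
  lam * (x 0 * x 2 + x 1 * x 3) - ω * (x 1 * x 2 - x 0 * x 3)
    - lam / √2 * ((x 0 ^ 2 + x 1 ^ 2) ^ 2 + (x 2 ^ 2 + x 3 ^ 2) ^ 2)

def lermanUmanskiiGradH (lam ω : ℝ) (x : ℝ⁴) : ℝ⁴ :=
  !₂[lam * x 2 + ω * x 3 - 2 * √2 * lam * x 0 * (x 0 ^ 2 + x 1 ^ 2),
    lam * x 3 - ω * x 2 - 2 * √2 * lam * x 1 * (x 0 ^ 2 + x 1 ^ 2),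
    lam * x 0 - ω * x 1 - 2 * √2 * lam * x 2 * (x 2 ^ 2 + x 3 ^ 2),
    lam * x 1 + ω * x 0 - 2 * √2 * lam * x 3 * (x 2 ^ 2 + x 3 ^ 2)]

def lermanUmanskiiK (x : ℝ⁴) : ℝ := x 1 * x 2 - x 0 * x 3

def lermanUmanskiiGradK (x : ℝ⁴) : ℝ⁴ := !₂[-x 3, x 2, x 1, -x 0]

end

theorem hasGradientAt_lermanUmanskiiH (lam ω : ℝ) (x : ℝ⁴) :
    HasGradientAt (lermanUmanskiiH lam ω) (lermanUmanskiiGradH lam ω x) x := by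
  have p := fun i => EuclideanSpace.hasFDerivAt_apply i x
  refine HasFDerivAt.hasGradientAt_of_apply_eq_inner
    ((((((p 0).mul (p 2)).add ((p 1).mul (p 3))).const_mul lam).sub
      ((((p 1).mul (p 2)).sub ((p 0).mul (p 3))).const_mul ω)).sub
      (((((p 0).pow 2).add ((p 1).pow 2)).pow 2).add ((((p 2).pow 2).add ((p 3).pow 2)).pow 2)
        |>.const_mul (lam / √2))) fun v => ?_
  simp only [EuclideanSpace.inner_fin_four, lermanUmanskiiGradH, Matrix.cons_val, sub_apply,
    add_apply, smul_apply, PiLp.proj_apply, smul_eq_mul, Pi.add_apply, nsmul_eq_mul, div_eq_mul_inv,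
    inv_sqrt_two]
  ring

theorem hasGradientAt_lermanUmanskiiK (x : ℝ⁴) :
    HasGradientAt lermanUmanskiiK (lermanUmanskiiGradK x) x := by
  have p := fun i => EuclideanSpace.hasFDerivAt_apply i x
  refine HasFDerivAt.hasGradientAt_of_apply_eq_inner
    (((p 1).mul (p 2)).sub ((p 0).mul (p 3))) fun v => ?_
  simp only [EuclideanSpace.inner_fin_four, lermanUmanskiiGradK, Matrix.cons_val, sub_apply,
    add_apply, smul_apply, PiLp.proj_apply, smul_eq_mul]
  ring

theorem inner_lermanUmanskiiGradK_symplecticJ_gradH (lam ω : ℝ) (x : ℝ⁴) :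
    ⟪lermanUmanskiiGradK x, symplecticJ (lermanUmanskiiGradH lam ω x)⟫_ℝ = 0 := by
  simp only [EuclideanSpace.inner_fin_four, lermanUmanskiiGradK, lermanUmanskiiGradH, symplecticJ,
    Matrix.cons_val]
  ring

/-- **`H` and `K` are first integrals of the unperturbed Lerman–Umanskiĭ system.**
For all `λ, ω ∈ ℝ` and `x ∈ ℝ⁴`, `⟨∇H(x), F(0,x)⟩ = 0` and `⟨∇K(x), F(0,x)⟩ = 0`. -/
theorem lerman_umanskii_first_integrals
    (lam ω : ℝ)
    (F : ℝ → EuclideanSpace ℝ (Fin 4) → EuclideanSpace ℝ (Fin 4))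
    (H K : EuclideanSpace ℝ (Fin 4) → ℝ)
    (hF : ∀ ε x, F ε x =
      WithLp.toLp 2 ![lam * x 0 - ω * x 1 - 2 * Real.sqrt 2 * lam * x 2 * ((x 2)^2 + (x 3)^2) + ε * x 1,
        ω * x 0 + lam * x 1 - 2 * Real.sqrt 2 * lam * x 3 * ((x 2)^2 + (x 3)^2),
        -lam * x 2 - ω * x 3 + 2 * Real.sqrt 2 * lam * x 0 * ((x 0)^2 + (x 1)^2) + ε * x 3,
        ω * x 2 - lam * x 3 + 2 * Real.sqrt 2 * lam * x 1 * ((x 0)^2 + (x 1)^2)])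
    (hH : ∀ x, H x = lam * (x 0 * x 2 + x 1 * x 3) - ω * (x 1 * x 2 - x 0 * x 3)
      - lam / Real.sqrt 2 * (((x 0)^2 + (x 1)^2)^2 + ((x 2)^2 + (x 3)^2)^2))
    (hK : ∀ x, K x = x 1 * x 2 - x 0 * x 3) :
    ∀ x, (inner ℝ (gradient H x) (F 0 x) : ℝ) = 0 ∧
      (inner ℝ (gradient K x) (F 0 x) : ℝ) = 0 := by
  intro x
  have hH : H = lermanUmanskiiH lam ω := funext hH
  have hK : K = lermanUmanskiiK := funext hK
  have hamiltonian : F 0 x = symplecticJ (lermanUmanskiiGradH lam ω x) := by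
    ext i
    fin_cases i <;>
      simp only [hF, symplecticJ, lermanUmanskiiGradH, PiLp.toLp_apply, Fin.zero_eta, Fin.mk_one,
        Fin.reduceFinMk, Matrix.cons_val, Matrix.cons_val_zero, Matrix.cons_val_one] <;>
      ring
  rw [hH, hK, (hasGradientAt_lermanUmanskiiH lam ω x).gradient,
    (hasGradientAt_lermanUmanskiiK x).gradient, hamiltonian]
  exact ⟨inner_self_symplecticJ _, inner_lermanUmanskiiGradK_symplecticJ_gradH lam ω x⟩
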